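/- arXiv:1101.3627 — 3 statements merged into one kernel-verified Lean document; each statement's English description precedes it below -/
import Mathlib

section
/- Let S ⊆ E^n be nonempty with density ρ(S) ≤ 1/2, and let a = χ^S be its characteristic function. Then nei(S) + 2(cor(S)+1)(1 − ρ(S)) ≤ n. -/
open Finset

/-- Weight of a vector in the Boolean cube: the number of ones. -/
def wt {n : ℕ} (y : Fin n → Bool) : ℕ := (Finset.univ.filter fun i => y i = true).card

/-- The face `E^n_y(z) = {x : [x,y] = [z,y]}`: all `x` agreeing with `z` on the
support of `y`. -/
def face {n : ℕ} (y z : Fin n → Bool) : Finset (Fin n → Bool) :=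
  Finset.univ.filter fun x => ∀ i, y i = true → x i = z i

/-- `χ^S` is correlation-immune of order `k`: all faces obtained by fixing `k`
coordinates (i.e. faces `E^n_y(z)` with `wt y = k`) intersect `S` in the same
cardinality. -/
def CorrImmune {n : ℕ} (S : Finset (Fin n → Bool)) (k : ℕ) : Prop :=
  ∀ y₁ z₁ y₂ z₂ : Fin n → Bool, wt y₁ = k → wt y₂ = k →
    (face y₁ z₁ ∩ S).card = (face y₂ z₂ ∩ S).card

/-- `cor S` : the maximum order of correlation immunity of `χ^S`. -/
noncomputable def cor {n : ℕ} (S : Finset (Fin n → Bool)) : ℕ :=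
  sSup {k | k ≤ n ∧ CorrImmune S k}

/-- Density `ρ(S) = |S| / 2^n`. -/
def rho {n : ℕ} (S : Finset (Fin n → Bool)) : ℚ := (S.card : ℚ) / 2 ^ n

/-- `nei S`: the average number of neighbors in `S` of vertices of `S`,
`(1/|S|) ∑_{x∈S} |B(x) ∩ S| - 1`, where `B x` is the Hamming ball of radius 1. -/
def nei {n : ℕ} (S : Finset (Fin n → Bool)) : ℚ :=
  (∑ x ∈ S, ((S.filter fun y => hammingDist x y ≤ 1).card : ℚ)) / (S.card : ℚ) - 1

/-- Characteristic function of `S`, as a rational-valued function. -/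
def chi {n : ℕ} (S : Finset (Fin n → Bool)) (x : Fin n → Bool) : ℚ := if x ∈ S then 1 else 0

/-- Characteristic function of `S` as a 2-coloring (color 1 = membership in `S`). -/
def chiCol {n : ℕ} (S : Finset (Fin n → Bool)) (x : Fin n → Bool) : Fin 2 :=
  if x ∈ S then 1 else 0

/-- `Col` is a perfect coloring with parameter matrix `A`: every vertex of color `i`
has exactly `A i j` neighbors (at Hamming distance 1) of color `j`. -/
def IsPerfectColoring {n : ℕ} (Col : (Fin n → Bool) → Fin 2) (A : Fin 2 → Fin 2 → ℕ) : Prop :=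
  ∀ x : Fin n → Bool, ∀ j : Fin 2,
    (Finset.univ.filter fun y => hammingDist x y = 1 ∧ Col y = j).card = A (Col x) j

/-- Fourier transform `â(v) = ∑_u a(u) (-1)^{⟨u,v⟩}`. -/
def fourierT {n : ℕ} (a : (Fin n → Bool) → ℚ) (v : Fin n → Bool) : ℚ :=
  ∑ u : Fin n → Bool, a u * (-1) ^ ((Finset.univ.filter fun i => u i = true ∧ v i = true).card)

/-- Coordinatewise XOR. -/
def xorv {n : ℕ} (u v : Fin n → Bool) : Fin n → Bool := fun i => xor (u i) (v i)

/-- Weight distribution `B_i(a) = (1/|S|) |{(u,v) ∈ S×S : wt(u⊕v) = i}|`. -/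
def Bdist {n : ℕ} (S : Finset (Fin n → Bool)) (i : ℕ) : ℚ :=
  (((S ×ˢ S).filter fun p => wt (xorv p.1 p.2) = i).card : ℚ) / (S.card : ℚ)

/-- Kravchuk polynomial `P_k(i) = ∑_{j=0}^k (-1)^j C(i,j) C(n-i,k-j)`. -/
def krav (n k i : ℕ) : ℚ :=
  ∑ j ∈ Finset.range (k + 1),
    (-1 : ℚ) ^ j * (Nat.choose i j : ℚ) * (Nat.choose (n - i) (k - j) : ℚ)

/-- MacWilliams transform `B'_k(a) = (1/|S|) ∑_{i=0}^n B_i(a) P_k(i)`. -/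
def Bmw {n : ℕ} (S : Finset (Fin n → Bool)) (k : ℕ) : ℚ :=
  (∑ i ∈ Finset.range (n + 1), Bdist S i * krav n k i) / (S.card : ℚ)

/-!
Write `â(v) = ∑_{u ∈ S} (-1)^⟨u,v⟩` for the Walsh–Fourier coefficients of `χ^S`. Parseval gives
`∑ â(v)² = 2^n |S|`, and since `n - 2 wt v` is the eigenvalue of the adjacency operator of the
cube on the character of `v`, also `∑ â(v)² (n - 2 wt v) = 2^n |S| nei(S)`. Correlation immunity
of order `k` forces `â(v) = 0` for `1 ≤ wt v ≤ k`, while `â(0) = |S|`; bounding `n - 2 wt v` by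
`n - 2(k+1)` on the remaining `v ≠ 0` yields `nei(S) ≤ n - 2(k+1)(1 - ρ(S))`.
-/

lemma bool_pi_add_eq_zero_iff {ι : Type*} (x y : ι → Bool) : x + y = 0 ↔ x = y := by
  rw [add_eq_zero_iff_eq_neg, show -y = y from funext fun i => BooleanRing.neg_eq (y i)]

def walsh {n : ℕ} (u v : Fin n → Bool) : ℚ :=
  (-1) ^ (univ.filter fun i => u i = true ∧ v i = true).card

section Walsh

variable {n : ℕ}

lemma walsh_eq_prod (u v : Fin n → Bool) :
    walsh u v = ∏ i, if u i = true ∧ v i = true then -1 else 1 := by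
  rw [walsh, prod_ite, prod_const, prod_const_one, mul_one]

lemma walsh_comm (u v : Fin n → Bool) : walsh u v = walsh v u := by
  simp only [walsh, and_comm]

lemma walsh_add_left (u w v : Fin n → Bool) : walsh (u + w) v = walsh u v * walsh w v := by
  simp only [walsh_eq_prod, ← prod_mul_distrib]
  have sign_xor : ∀ a b c : Bool, (if xor a b = true ∧ c = true then (-1 : ℚ) else 1) =
      (if a = true ∧ c = true then -1 else 1) * (if b = true ∧ c = true then -1 else 1) := by
    intro a b c; cases a <;> cases b <;> cases c <;> norm_num
  exact prod_congr rfl fun i _ => sign_xor _ _ _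

lemma walsh_zero_right (u : Fin n → Bool) : walsh u 0 = 1 := by
  simp [walsh]

lemma sum_walsh (x : Fin n → Bool) :
    ∑ v, walsh x v = if x = 0 then 2 ^ n else 0 := by
  simp only [walsh_eq_prod]
  rw [← Fintype.prod_sum (fun i (b : Bool) => if x i = true ∧ b = true then (-1 : ℚ) else 1)]
  split_ifs with hx
  · simp [hx]
  · obtain ⟨i, hi⟩ : ∃ i, x i = true := by
      by_contra! h
      exact hx (funext fun i => Bool.eq_false_iff.mpr (h i))
    exact prod_eq_zero (mem_univ i) (by simp [hi])

lemma walsh_single (i : Fin n) (v : Fin n → Bool) :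
    walsh (Pi.single i true) v = if v i = true then -1 else 1 := by
  rw [walsh_eq_prod, prod_eq_single i]
  · simp
  · intro j _ hj; simp [hj]
  · simp

lemma sum_walsh_single (v : Fin n → Bool) :
    ∑ i, walsh (Pi.single i true) v = n - 2 * wt v := by
  simp only [walsh_single, sum_ite, sum_const, nsmul_eq_mul, wt]
  have h := card_filter_add_card_filter_not (s := univ) fun i => v i = true
  rw [card_univ, Fintype.card_fin] at h
  have hq : (#{i | v i = true} : ℚ) + #{i | ¬v i = true} = n := by exact_mod_cast h
  linarith

lemma wt_zero : wt (0 : Fin n → Bool) = 0 := by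
  simp [wt]

lemma wt_single (i : Fin n) : wt (Pi.single i true) = 1 := by
  rw [wt, card_eq_one]
  exact ⟨i, by ext j; by_cases h : j = i <;> simp [h]⟩

lemma card_filter_eq_single (x : Fin n → Bool) :
    #{i | x = Pi.single i true} = if wt x = 1 then 1 else 0 := by
  split_ifs with hx
  · obtain ⟨j, hj⟩ := card_eq_one.mp hx
    have hxj : x = Pi.single j true := by
      funext i
      have hi : x i = true ↔ i = j := by simpa using congrArg (i ∈ ·) hj
      rw [Pi.single_apply]
      split_ifs with h
      · exact hi.mpr h
      · exact Bool.eq_false_iff.mpr (mt hi.mp h)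
    rw [card_eq_one]
    refine ⟨j, ?_⟩
    ext i
    simp only [mem_filter, mem_univ, true_and, mem_singleton, hxj]
    refine ⟨fun h => ?_, fun h => h ▸ rfl⟩
    by_contra hij
    simpa [Pi.single_apply, Ne.symm hij] using congrFun h j
  · rw [card_eq_zero, filter_eq_empty_iff]
    rintro i - rfl
    exact hx (wt_single i)

lemma sum_walsh_mul_sub_two_mul_wt (x : Fin n → Bool) :
    ∑ v, walsh x v * (n - 2 * wt v) = if wt x = 1 then 2 ^ n else 0 := by
  simp_rw [← sum_walsh_single, mul_sum, ← walsh_add_left]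
  rw [sum_comm]
  simp_rw [sum_walsh, bool_pi_add_eq_zero_iff]
  rw [sum_ite, sum_const_zero, add_zero, sum_const, card_filter_eq_single]
  split_ifs <;> simp

end Walsh

/-- The number of ordered pairs of adjacent vertices of `S`, i.e. twice the number of edges of
the subgraph of the cube induced by `S`. -/
def numAdjPairs {n : ℕ} (S : Finset (Fin n → Bool)) : ℕ :=
  #{p ∈ S ×ˢ S | hammingDist p.1 p.2 = 1}

section Fourier
variable {n : ℕ} (S : Finset (Fin n → Bool))

lemma fourierT_chi (v : Fin n → Bool) : fourierT (chi S) v = ∑ u ∈ S, walsh u v := by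
  simp only [fourierT, chi, ite_mul, one_mul, zero_mul, sum_ite_mem, univ_inter, walsh]

lemma fourierT_chi_zero : fourierT (chi S) 0 = #S := by
  simp [fourierT_chi, walsh_zero_right]

lemma sum_sq_fourierT_chi_mul (f : (Fin n → Bool) → ℚ) :
    ∑ v, fourierT (chi S) v ^ 2 * f v = ∑ p ∈ S ×ˢ S, ∑ v, walsh (p.1 + p.2) v * f v := by
  have sq_eq (v) : fourierT (chi S) v ^ 2 = ∑ p ∈ S ×ˢ S, walsh (p.1 + p.2) v := by
    simp only [sq, fourierT_chi, sum_mul_sum, sum_product, walsh_add_left]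
  simp_rw [sq_eq, sum_mul]
  exact sum_comm

lemma sum_sq_fourierT_chi : ∑ v, fourierT (chi S) v ^ 2 = 2 ^ n * #S := by
  simpa [sum_walsh, bool_pi_add_eq_zero_iff, sum_product, mul_comm]
    using sum_sq_fourierT_chi_mul S 1

lemma wt_add (u w : Fin n → Bool) : wt (u + w) = hammingDist u w := by
  simp only [wt, hammingDist]
  congr! 2 with i
  change xor (u i) (w i) = true ↔ u i ≠ w i
  cases u i <;> cases w i <;> decide

lemma sum_sq_fourierT_chi_mul_sub_two_mul_wt :
    ∑ v, fourierT (chi S) v ^ 2 * (n - 2 * wt v) = 2 ^ n * (numAdjPairs S : ℚ) := by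
  rw [sum_sq_fourierT_chi_mul]
  simp only [sum_walsh_mul_sub_two_mul_wt, wt_add]
  rw [sum_ite, sum_const_zero, add_zero, sum_const, nsmul_eq_mul, mul_comm, numAdjPairs]

end Fourier

section Face
variable {n : ℕ}

lemma mem_face_comm {y x z : Fin n → Bool} : x ∈ face y z ↔ z ∈ face y x := by
  simp only [face, mem_filter, mem_univ, true_and, eq_comm]

lemma walsh_eq_of_mem_face {v x z : Fin n → Bool} (h : x ∈ face v z) :
    walsh x v = walsh z v := by
  simp only [face, mem_filter, mem_univ, true_and] at h
  unfold walsh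
  congr 1
  exact congrArg card (filter_congr fun i _ => and_congr_left fun hv => by rw [h i hv])

lemma add_add_mem_face {y x a : Fin n → Bool} (hx : x ∈ face y a) (b : Fin n → Bool) :
    x + a + b ∈ face y b := by
  simp only [face, mem_filter, mem_univ, true_and] at hx ⊢
  intro i hi
  rw [Pi.add_apply, Pi.add_apply, hx i hi, BooleanRing.add_self, zero_add]

lemma card_face_eq (y z w : Fin n → Bool) : #(face y z) = #(face y w) := by
  have cancel : ∀ x u : Fin n → Bool, x + u + u = x := fun x u => by
    rw [add_assoc, (bool_pi_add_eq_zero_iff u u).mpr rfl, add_zero]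
  exact card_bij' (fun x _ => x + z + w) (fun x _ => x + w + z)
    (fun x hx => add_add_mem_face hx w) (fun x hx => add_add_mem_face hx z)
    (fun x _ => by rw [cancel, cancel]) (fun x _ => by rw [cancel, cancel])

theorem fourierT_chi_eq_zero (S : Finset (Fin n → Bool)) {v : Fin n → Bool}
    (hS : CorrImmune S (wt v)) (hv : v ≠ 0) : fourierT (chi S) v = 0 := by
  have hface : #(face v 0) ≠ 0 := card_ne_zero.mpr ⟨0, by simp [face]⟩
  suffices (#(face v 0) : ℚ) * fourierT (chi S) v = 0 by simpa [hface] using this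
  calc (#(face v 0) : ℚ) * fourierT (chi S) v
      = ∑ u ∈ S, ∑ z ∈ face v u, walsh z v := by
        rw [fourierT_chi, mul_sum]
        refine sum_congr rfl fun u _ => ?_
        rw [sum_congr rfl fun z hz => walsh_eq_of_mem_face hz, sum_const, nsmul_eq_mul,
          card_face_eq v u 0]
    _ = ∑ z, ∑ u ∈ face v z ∩ S, walsh z v :=
        sum_comm' fun u z => by
          rw [mem_inter, mem_face_comm]
          simp only [mem_univ, and_true]
          exact and_comm
    _ = #(face v 0 ∩ S) * ∑ z, walsh v z := by
        rw [mul_sum]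
        refine sum_congr rfl fun z _ => ?_
        rw [sum_const, hS v z v 0 rfl rfl, nsmul_eq_mul, walsh_comm]
    _ = 0 := by rw [sum_walsh, if_neg hv, mul_zero]

end Face

section CorrImmune
variable {n : ℕ} {S : Finset (Fin n → Bool)}

lemma face_of_wt_eq_zero {y : Fin n → Bool} (hy : wt y = 0) (z : Fin n → Bool) :
    face y z = univ := by
  rw [wt, card_eq_zero, filter_eq_empty_iff] at hy
  ext x
  simp [face, hy]

lemma corrImmune_zero (S : Finset (Fin n → Bool)) : CorrImmune S 0 := by
  intro y₁ z₁ y₂ z₂ h₁ h₂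
  rw [face_of_wt_eq_zero h₁, face_of_wt_eq_zero h₂]

lemma exists_eq_false_of_wt_lt {y : Fin n → Bool} (hy : wt y < n) : ∃ i, y i = false := by
  by_contra! h
  have : univ.filter (fun i => y i = true) = univ :=
    filter_true_of_mem fun i _ => by simpa using h i
  simp [wt, this] at hy

lemma wt_update_true {y : Fin n → Bool} {i : Fin n} (hi : y i = false) :
    wt (Function.update y i true) = wt y + 1 := by
  have : univ.filter (fun j => Function.update y i true j = true)
      = insert i (univ.filter fun j => y j = true) := by
    ext j
    by_cases hj : j = i
    · subst hj; simp
    · simp [hj]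
  rw [wt, this, card_insert_of_notMem (by simp [hi]), wt]

lemma face_update_true {y : Fin n → Bool} {i : Fin n} (hi : y i = false) (z : Fin n → Bool)
    (b : Bool) :
    face (Function.update y i true) (Function.update z i b) = (face y z).filter (· i = b) := by
  ext x
  simp only [face, mem_filter, mem_univ, true_and, Function.update_apply]
  constructor
  · intro h
    refine ⟨fun j hj => ?_, by simpa using h i⟩
    have hji : j ≠ i := by rintro rfl; simp [hi] at hj
    simpa [hji, hj] using h j
  · rintro ⟨h, rfl⟩ j hj
    split_ifs with hji
    · rw [hji]
    · simpa [hji] using h j (by simpa [hji] using hj)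

-- Fixing one more free coordinate splits a face into two faces of the next order.
lemma CorrImmune.of_succ {k : ℕ} (h : CorrImmune S (k + 1)) (hk : k < n) : CorrImmune S k := by
  have halve : ∀ y z, wt y = k → ∃ y' z', wt y' = k + 1 ∧
      #(face y z ∩ S) = 2 * #(face y' z' ∩ S) := by
    intro y z hy
    obtain ⟨i, hi⟩ := exists_eq_false_of_wt_lt (hy ▸ hk)
    have hwt : wt (Function.update y i true) = k + 1 := by rw [wt_update_true hi, hy]
    refine ⟨_, Function.update z i true, hwt, ?_⟩
    have hsplit := card_filter_add_card_filter_not (s := face y z ∩ S) fun x => x i = true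
    simp only [Bool.not_eq_true, ← filter_inter] at hsplit
    rw [← face_update_true hi, ← face_update_true hi] at hsplit
    rw [← hsplit, h _ (Function.update z i false) _ (Function.update z i true) hwt hwt, two_mul]
  intro y₁ z₁ y₂ z₂ h₁ h₂
  obtain ⟨a, b, hab, e₁⟩ := halve y₁ z₁ h₁
  obtain ⟨c, d, hcd, e₂⟩ := halve y₂ z₂ h₂
  rw [e₁, e₂, h a b c d hab hcd]

lemma CorrImmune.mono {j k : ℕ} (h : CorrImmune S k) (hk : k ≤ n) (hjk : j ≤ k) :
    CorrImmune S j := by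
  induction k, hjk using Nat.le_induction with
  | base => exact h
  | succ k _ ih => exact ih (h.of_succ hk) (k.le_succ.trans hk)

end CorrImmune

section Main
variable {n : ℕ} {S : Finset (Fin n → Bool)}

lemma cor_le_and_corrImmune (S : Finset (Fin n → Bool)) : cor S ≤ n ∧ CorrImmune S (cor S) :=
  Nat.sSup_mem (s := {k | k ≤ n ∧ CorrImmune S k}) ⟨0, n.zero_le, corrImmune_zero S⟩
    ⟨n, fun _ hk => hk.1⟩

lemma card_filter_hammingDist_le_one {x : Fin n → Bool} (hx : x ∈ S) :
    #{y ∈ S | hammingDist x y ≤ 1} = #{y ∈ S | hammingDist x y = 1} + 1 := by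
  have : S.filter (fun y => hammingDist x y ≤ 1)
      = insert x (S.filter fun y => hammingDist x y = 1) := by
    ext y
    simp only [mem_filter, mem_insert, Nat.le_one_iff_eq_zero_or_eq_one, hammingDist_eq_zero]
    constructor
    · rintro ⟨hy, rfl | h1⟩ <;> simp [*]
    · rintro (rfl | ⟨hy, h1⟩) <;> simp [*]
  rw [this, card_insert_of_notMem (by simp)]

lemma nei_eq (hS : S.Nonempty) : nei S = numAdjPairs S / #S := by
  have hN : (#S : ℚ) ≠ 0 := by exact_mod_cast hS.card_pos.ne'
  have hsum : ∑ x ∈ S, #{y ∈ S | hammingDist x y ≤ 1} = numAdjPairs S + #S := by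
    rw [sum_congr rfl fun x hx => card_filter_hammingDist_le_one hx, sum_add_distrib,
      card_eq_sum_ones S, numAdjPairs, card_filter, sum_product]
    simp only [card_filter]
  rw [nei, ← Nat.cast_sum, hsum]
  field_simp
  push_cast
  ring

lemma two_pow_mul_numAdjPairs_le {k : ℕ} (hk : k ≤ n) (hCI : CorrImmune S k) :
    2 ^ n * (numAdjPairs S : ℚ) - n * #S ^ 2 ≤ (n - 2 * (k + 1)) * (2 ^ n * #S - #S ^ 2) := by
  have hterm : ∀ v ∈ univ.erase 0, fourierT (chi S) v ^ 2 * (n - 2 * wt v)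
      ≤ fourierT (chi S) v ^ 2 * (n - 2 * (k + 1)) := by
    intro v hv
    rcases le_or_gt (wt v) k with hw | hw
    · simp [fourierT_chi_eq_zero S (hCI.mono hk hw) (ne_of_mem_erase hv)]
    · have : (k : ℚ) + 1 ≤ wt v := by exact_mod_cast hw
      exact mul_le_mul_of_nonneg_left (by linarith) (sq_nonneg _)
  have hsum := sum_le_sum hterm
  rw [← sum_mul, sum_erase_eq_sub (mem_univ 0), sum_erase_eq_sub (mem_univ 0),
    sum_sq_fourierT_chi_mul_sub_two_mul_wt, sum_sq_fourierT_chi, fourierT_chi_zero, wt_zero,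
    Nat.cast_zero] at hsum
  linarith

theorem nei_add_le (hS : S.Nonempty) {k : ℕ} (hk : k ≤ n) (hCI : CorrImmune S k) :
    nei S + 2 * ((k : ℚ) + 1) * (1 - rho S) ≤ n := by
  have key : nei S + 2 * ((k : ℚ) + 1) * (1 - rho S) - n =
      (2 ^ n * (numAdjPairs S : ℚ) - n * #S ^ 2 - (n - 2 * (k + 1)) * (2 ^ n * #S - #S ^ 2)) /
        (#S * 2 ^ n) := by
    rw [nei_eq hS, rho]
    field_simp
    ring
  have : nei S + 2 * ((k : ℚ) + 1) * (1 - rho S) - n ≤ 0 :=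
    key ▸ div_nonpos_of_nonpos_of_nonneg (by linarith [two_pow_mul_numAdjPairs_le hk hCI])
      (by positivity)
  linarith

end Main

theorem stmt0_general {n : ℕ} (S : Finset (Fin n → Bool)) (hS : S.Nonempty) :
    nei S + 2 * ((cor S : ℚ) + 1) * (1 - rho S) ≤ (n : ℚ) := by
  obtain ⟨hcor, hCI⟩ := cor_le_and_corrImmune S
  exact nei_add_le hS hcor hCI

/-- For nonempty `S ⊆ E^n` with `ρ(S) ≤ 1/2`,
`nei(S) + 2(cor(S)+1)(1 - ρ(S)) ≤ n`. -/
theorem stmt0 {n : ℕ} (S : Finset (Fin n → Bool)) (hS : S.Nonempty) (hρ : rho S ≤ 1 / 2) :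
    nei S + 2 * ((cor S : ℚ) + 1) * (1 - rho S) ≤ (n : ℚ) :=
  stmt0_general S hS
end

section
/- Let S ⊆ E^n be nonempty with density ρ(S) ≤ 1/2. If nei(S) + 2(cor(S)+1)(1 − ρ(S)) = n, then the characteristic function χ^S is a perfect 2-coloring of E^n. -/
open Finset

/-!
Write `F = fourierT (chi S)`. Parseval gives `∑ F(w)² = 2ⁿ |S|`, and summing over the `n`
neighbours (`nbrSum`) is diagonal in the Walsh basis with eigenvalue `n - 2 wt w`, so
`∑ (n - 2 wt w) F(w)² = 2ⁿ |S| nei(S)`. Correlation immunity of order `c = cor S` kills `F` on the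
weights `1, …, c`, hence `∑_{w ≠ 0} (wt w - c - 1) F(w)² ≥ 0`, and the hypothesis says exactly that
this sum vanishes. So `F` is supported on the weights `0` and `c + 1`, which makes the number of
neighbours of `x` in `S` an affine function of `χ^S(x)`.
-/

namespace BoolCube

variable {n : ℕ}

def flipAt (i : Fin n) (x : Fin n → Bool) : Fin n → Bool := Function.update x i (!x i)

lemma flipAt_involutive (i : Fin n) : Function.Involutive (flipAt i) := by
  intro x
  funext j
  by_cases h : j = i
  · subst h; simp [flipAt]
  · simp [flipAt, Function.update_of_ne h]

def walsh (w x : Fin n → Bool) : ℚ := (-1) ^ #{i | x i = true ∧ w i = true}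

lemma fourierT_eq_sum_walsh (a : (Fin n → Bool) → ℚ) (w : Fin n → Bool) :
    fourierT a w = ∑ x, a x * walsh w x := rfl

lemma walsh_eq_prod (w x : Fin n → Bool) :
    walsh w x = ∏ i, if x i = true ∧ w i = true then -1 else 1 := by
  simp [walsh, Finset.prod_ite]

lemma walsh_comm (w x : Fin n → Bool) : walsh w x = walsh x w := by
  simp only [walsh_eq_prod, and_comm]

lemma walsh_false_left (x : Fin n → Bool) : walsh (fun _ => false) x = 1 := by
  simp [walsh_eq_prod]

lemma walsh_false_right (w : Fin n → Bool) : walsh w (fun _ => false) = 1 := by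
  simp [walsh_eq_prod]

lemma walsh_flipAt (w : Fin n → Bool) (i : Fin n) (x : Fin n → Bool) :
    walsh w (flipAt i x) = (if w i then -1 else 1) * walsh w x := by
  simp only [walsh_eq_prod]
  rw [← Finset.mul_prod_erase _ _ (Finset.mem_univ i),
    ← Finset.mul_prod_erase _ _ (Finset.mem_univ i), ← mul_assoc]
  congr 1
  · simp only [flipAt, Function.update_self]
    cases w i <;> cases x i <;> simp
  · refine Finset.prod_congr rfl fun j hj => ?_
    rw [flipAt, Function.update_of_ne (Finset.ne_of_mem_erase hj)]

lemma sum_walsh_mul_walsh (u v : Fin n → Bool) :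
    ∑ w, walsh w u * walsh w v = if u = v then 2 ^ n else 0 := by
  have hcoord (i : Fin n) : ∑ b : Bool,
      (if u i = true ∧ b = true then (-1 : ℚ) else 1) *
        (if v i = true ∧ b = true then -1 else 1)
        = if u i = v i then 2 else 0 := by
    cases u i <;> cases v i <;> norm_num
  simp only [walsh_eq_prod, ← Finset.prod_mul_distrib]
  rw [← Fintype.prod_sum (fun i b => (if u i = true ∧ b = true then (-1 : ℚ) else 1) *
    (if v i = true ∧ b = true then -1 else 1))]
  simp only [hcoord, Finset.prod_ite_zero, Finset.prod_const, Finset.card_univ, Fintype.card_fin,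
    funext_iff, Finset.mem_univ, true_implies]

lemma sum_walsh (w : Fin n → Bool) :
    ∑ x, walsh w x = if w = (fun _ => false) then 2 ^ n else 0 := by
  rw [← sum_walsh_mul_walsh]
  simp [walsh_false_right, walsh_comm w]

lemma wt_eq_zero_iff {w : Fin n → Bool} : wt w = 0 ↔ w = fun _ => false := by
  simp [wt, funext_iff]

lemma sum_ite_neg_one (w : Fin n → Bool) :
    ∑ i, (if w i then (-1 : ℚ) else 1) = n - 2 * wt w := by
  have h := Finset.card_filter_add_card_filter_not (s := Finset.univ) (fun i => w i = true)
  rw [Finset.card_univ, Fintype.card_fin] at h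
  have hq : (#{i | w i = true} : ℚ) + #{i | ¬w i = true} = n := by exact_mod_cast h
  rw [Finset.sum_ite, Finset.sum_const, Finset.sum_const, wt]
  simp only [nsmul_eq_mul]
  linarith

lemma sum_fourierT_mul_fourierT (a b : (Fin n → Bool) → ℚ) :
    ∑ w, fourierT a w * fourierT b w = 2 ^ n * ∑ x, a x * b x := by
  have horth (x y : Fin n → Bool) : ∑ w, a x * walsh w x * (b y * walsh w y)
      = a x * b y * if x = y then 2 ^ n else 0 := by
    rw [← sum_walsh_mul_walsh, Finset.mul_sum]
    exact Finset.sum_congr rfl fun w _ => by ring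
  calc ∑ w, fourierT a w * fourierT b w
      = ∑ w, ∑ x, ∑ y, a x * walsh w x * (b y * walsh w y) := by
        simp only [fourierT_eq_sum_walsh, Finset.sum_mul_sum]
    _ = ∑ x, ∑ y, ∑ w, a x * walsh w x * (b y * walsh w y) := by
        rw [Finset.sum_comm]
        exact Finset.sum_congr rfl fun x _ => Finset.sum_comm
    _ = 2 ^ n * ∑ x, a x * b x := by
        simp only [horth, mul_ite, mul_zero, Finset.sum_ite_eq, Finset.mem_univ, if_true,
          Finset.mul_sum]
        exact Finset.sum_congr rfl fun x _ => by ring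

lemma eq_zero_of_fourierT_eq_zero {a : (Fin n → Bool) → ℚ} (h : ∀ w, fourierT a w = 0) :
    a = 0 := by
  have hsq : ∑ x, a x * a x = 0 := by
    have := sum_fourierT_mul_fourierT a a
    simp only [h, mul_zero, Finset.sum_const_zero] at this
    exact (mul_eq_zero.mp this.symm).resolve_left (by positivity)
  funext x
  exact mul_self_eq_zero.mp <|
    (Finset.sum_eq_zero_iff_of_nonneg fun y _ => mul_self_nonneg (a y)).mp hsq x (by simp)

def nbrSum (a : (Fin n → Bool) → ℚ) (x : Fin n → Bool) : ℚ := ∑ i, a (flipAt i x)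

lemma fourierT_nbrSum (a : (Fin n → Bool) → ℚ) (w : Fin n → Bool) :
    fourierT (nbrSum a) w = (n - 2 * wt w) * fourierT a w := by
  have hflip (i : Fin n) : ∑ x, a (flipAt i x) * walsh w x
      = (if w i then -1 else 1) * fourierT a w := by
    rw [← Equiv.sum_comp (flipAt_involutive i).toPerm]
    simp only [Function.Involutive.coe_toPerm, flipAt_involutive i _, walsh_flipAt,
      fourierT_eq_sum_walsh, Finset.mul_sum]
    exact Finset.sum_congr rfl fun x _ => by ring
  simp only [fourierT_eq_sum_walsh, nbrSum, Finset.sum_mul]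
  rw [Finset.sum_comm]
  simp only [← fourierT_eq_sum_walsh, hflip, ← Finset.sum_mul, sum_ite_neg_one]

lemma sum_weight_mul_fourierT_sq (a : (Fin n → Bool) → ℚ) :
    ∑ w, (n - 2 * wt w) * fourierT a w ^ 2 = 2 ^ n * ∑ x, nbrSum a x * a x := by
  simp only [← sum_fourierT_mul_fourierT, fourierT_nbrSum]
  exact Finset.sum_congr rfl fun w _ => by ring

lemma nbrSum_eq_of_fourierT_ne_zero {a : (Fin n → Bool) → ℚ} {k : ℕ}
    (h : ∀ w, w ≠ (fun _ => false) → fourierT a w ≠ 0 → wt w = k) (x : Fin n → Bool) :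
    nbrSum a x = (n - 2 * k) * a x + 2 * k * fourierT a (fun _ => false) / 2 ^ n := by
  set c : ℚ := 2 * k * fourierT a (fun _ => false) / 2 ^ n
  suffices (fun x => nbrSum a x - (n - 2 * k) * a x - c) = 0 by
    have := congrFun this x
    simp only [Pi.zero_apply] at this
    linarith
  refine eq_zero_of_fourierT_eq_zero fun w => ?_
  simp only [fourierT_eq_sum_walsh, sub_mul, Finset.sum_sub_distrib, mul_assoc, ← Finset.mul_sum,
    sum_walsh]
  simp only [← fourierT_eq_sum_walsh, fourierT_nbrSum]
  by_cases hw : w = (fun _ => false)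
  · subst hw
    rw [if_pos rfl, wt_eq_zero_iff.mpr rfl]
    simp only [c]
    field_simp
    ring
  · rw [if_neg hw, mul_zero, sub_zero]
    by_cases hF : fourierT a w = 0
    · simp [hF]
    · rw [h w hw hF]
      ring

lemma hammingDist_flipAt (i : Fin n) (x : Fin n → Bool) : hammingDist x (flipAt i x) = 1 := by
  refine Finset.card_eq_one.mpr ⟨i, Finset.ext fun j => ?_⟩
  rw [Finset.mem_filter, Finset.mem_singleton]
  by_cases h : j = i
  · subst h; simp [flipAt]
  · simp [flipAt, h]

lemma exists_flipAt_eq_of_hammingDist_eq_one {x y : Fin n → Bool} (h : hammingDist x y = 1) :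
    ∃ i, flipAt i x = y := by
  obtain ⟨i, hi⟩ := Finset.card_eq_one.mp h
  refine ⟨i, funext fun j => ?_⟩
  have hj : x j ≠ y j ↔ j = i := by simpa using Finset.ext_iff.mp hi j
  by_cases h : j = i
  · subst h
    have := hj.mpr rfl
    simp only [flipAt, Function.update_self]
    revert this
    cases x j <;> cases y j <;> simp
  · rw [flipAt, Function.update_of_ne h]
    simpa [h] using hj

lemma flipAt_left_injective (x : Fin n → Bool) : Function.Injective fun i => flipAt i x := by
  intro i j h
  by_contra hij
  have := congrFun h i
  simp [flipAt, Function.update_of_ne hij] at this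

lemma card_hammingDist_eq_one_and (x : Fin n → Bool) (P : (Fin n → Bool) → Prop)
    [DecidablePred P] : #{y | hammingDist x y = 1 ∧ P y} = #{i | P (flipAt i x)} := by
  rw [← Finset.card_image_of_injective _ (flipAt_left_injective x)]
  congr 1
  ext y
  simp only [Finset.mem_filter, Finset.mem_univ, true_and, Finset.mem_image]
  constructor
  · rintro ⟨hd, hP⟩
    obtain ⟨i, rfl⟩ := exists_flipAt_eq_of_hammingDist_eq_one hd
    exact ⟨i, hP, rfl⟩
  · rintro ⟨i, hP, rfl⟩
    exact ⟨hammingDist_flipAt i x, hP⟩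

lemma card_hammingDist_eq_one (x : Fin n → Bool) :
    #{y | hammingDist x y = 1} = n := by
  simpa using card_hammingDist_eq_one_and x (fun _ => True)

lemma nbrSum_chi (S : Finset (Fin n → Bool)) (x : Fin n → Bool) :
    nbrSum (chi S) x = #{y | hammingDist x y = 1 ∧ y ∈ S} := by
  rw [card_hammingDist_eq_one_and, nbrSum]
  simp only [chi, Finset.sum_boole]

lemma sum_nbrSum_chi_mul_chi (S : Finset (Fin n → Bool)) :
    ∑ x, nbrSum (chi S) x * chi S x
      = ∑ x ∈ S, (#{y | hammingDist x y = 1 ∧ y ∈ S} : ℚ) := by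
  simp only [nbrSum_chi, chi, mul_ite, mul_one, mul_zero, Finset.sum_ite_mem, Finset.univ_inter]

lemma sum_chi_mul_chi (S : Finset (Fin n → Bool)) : ∑ x, chi S x * chi S x = #S := by
  simp [chi]

lemma fourierT_chi_false (S : Finset (Fin n → Bool)) :
    fourierT (chi S) (fun _ => false) = #S := by
  simp [fourierT_eq_sum_walsh, walsh_false_left, chi]

lemma card_mul_nei (S : Finset (Fin n → Bool)) :
    #S * nei S = ∑ x ∈ S, (#{y | hammingDist x y = 1 ∧ y ∈ S} : ℚ) := by
  have hball (x) (hx : x ∈ S) : (#{y ∈ S | hammingDist x y ≤ 1} : ℚ)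
      = #{y | hammingDist x y = 1 ∧ y ∈ S} + 1 := by
    have : S.filter (fun y => hammingDist x y ≤ 1)
        = insert x (univ.filter fun y => hammingDist x y = 1 ∧ y ∈ S) := by
      ext y
      simp only [Finset.mem_filter, Finset.mem_insert, Finset.mem_univ, true_and,
        Nat.le_one_iff_eq_zero_or_eq_one, hammingDist_eq_zero]
      constructor
      · rintro ⟨hy, rfl | h⟩ <;> simp_all
      · rintro (rfl | ⟨h, hy⟩) <;> simp_all
    rw [this, Finset.card_insert_of_notMem (by simp), Nat.cast_add, Nat.cast_one]
  rcases S.eq_empty_or_nonempty with rfl | hS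
  · simp
  · rw [nei, Finset.sum_congr rfl hball, Finset.sum_add_distrib]
    have : (#S : ℚ) ≠ 0 := by exact_mod_cast hS.card_ne_zero
    field_simp
    simp

lemma corrImmune_zero (S : Finset (Fin n → Bool)) : CorrImmune S 0 := by
  intro y₁ z₁ y₂ z₂ h₁ h₂
  rw [wt_eq_zero_iff] at h₁ h₂
  subst h₁ h₂
  simp [face]

lemma cor_le_and_corrImmune (S : Finset (Fin n → Bool)) : cor S ≤ n ∧ CorrImmune S (cor S) :=
  Nat.sSup_mem (s := {k | k ≤ n ∧ CorrImmune S k}) ⟨0, Nat.zero_le n, corrImmune_zero S⟩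
    ⟨n, fun _ hk => hk.1⟩

lemma mem_face_comm {y x z : Fin n → Bool} : x ∈ face y z ↔ z ∈ face y x := by
  simp only [face, Finset.mem_filter, Finset.mem_univ, true_and]
  exact forall₂_congr fun _ _ => eq_comm

lemma face_eq_piFinset (y z : Fin n → Bool) :
    face y z = Fintype.piFinset fun i => if y i then {z i} else univ := by
  ext x
  simp only [face, Finset.mem_filter, Finset.mem_univ, true_and, Fintype.mem_piFinset]
  refine forall_congr' fun i => ?_
  cases y i <;> simp

lemma card_face_eq (y z z' : Fin n → Bool) : #(face y z) = #(face y z') := by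
  simp only [face_eq_piFinset, Fintype.card_piFinset, apply_ite Finset.card, Finset.card_singleton]

lemma walsh_eq_of_mem_face {w y x z : Fin n → Bool} (hwy : ∀ i, w i = true → y i = true)
    (hx : x ∈ face y z) : walsh w x = walsh w z := by
  simp only [face, Finset.mem_filter, Finset.mem_univ, true_and] at hx
  simp only [walsh_eq_prod]
  refine Finset.prod_congr rfl fun i _ => ?_
  by_cases hw : w i = true
  · rw [hx i (hwy i hw)]
  · simp [hw]

lemma fourierT_chi_eq_zero_of_corrImmune {S : Finset (Fin n → Bool)} {w y : Fin n → Bool}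
    (hw : w ≠ fun _ => false) (hwy : ∀ i, w i = true → y i = true)
    (hS : CorrImmune S (wt y)) : fourierT (chi S) w = 0 := by
  -- Double count `∑ z, walsh w z * #(face y z ∩ S)`: `walsh w` is constant on the faces of `y`,
  -- and the face counts are constant, leaving a multiple of `∑ z, walsh w z = 0`.
  set f : ℕ := #(face y fun _ => false)
  have hf : (f : ℚ) ≠ 0 := by
    exact_mod_cast (Finset.card_pos.mpr ⟨fun _ => false, by simp [face]⟩).ne'
  have hcount : fourierT (chi S) w * f = ∑ z, walsh w z * #(face y z ∩ S) := by
    calc fourierT (chi S) w * f = ∑ u ∈ S, ∑ z ∈ face y u, walsh w z := by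
          simp only [fourierT_eq_sum_walsh, chi, ite_mul, one_mul, zero_mul, Finset.sum_ite_mem,
            Finset.univ_inter, Finset.sum_mul]
          refine Finset.sum_congr rfl fun u _ => ?_
          rw [Finset.sum_congr rfl fun z hz => walsh_eq_of_mem_face hwy hz, Finset.sum_const,
            card_face_eq y u, nsmul_eq_mul, mul_comm]
      _ = ∑ z, ∑ u ∈ face y z ∩ S, walsh w z := by
          refine Finset.sum_comm' fun u z => ?_
          simp only [Finset.mem_inter, Finset.mem_univ, and_true, mem_face_comm (x := z)]
          exact and_comm
      _ = ∑ z, walsh w z * #(face y z ∩ S) := by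
          simp only [Finset.sum_const, nsmul_eq_mul, mul_comm]
  have hconst : ∑ z, walsh w z * #(face y z ∩ S)
      = #(face y (fun _ => false) ∩ S) * ∑ z, walsh w z := by
    rw [Finset.mul_sum]
    exact Finset.sum_congr rfl fun z _ => by rw [hS y z y (fun _ => false) rfl rfl, mul_comm]
  rw [hconst, sum_walsh, if_neg hw, mul_zero] at hcount
  exact (mul_eq_zero.mp hcount).resolve_right hf

lemma fourierT_chi_eq_zero_of_wt_le_cor {S : Finset (Fin n → Bool)} {w : Fin n → Bool}
    (hw : w ≠ fun _ => false) (hwS : wt w ≤ cor S) : fourierT (chi S) w = 0 := by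
  obtain ⟨hcor, hS⟩ := cor_le_and_corrImmune S
  obtain ⟨t, hsub, ht⟩ := Finset.exists_superset_card_eq hwS (by simpa using hcor)
  have hwy (i) (hi : w i = true) : decide (i ∈ t) = true := by
    simpa using hsub (by simpa using hi)
  have hwt : wt (fun i => decide (i ∈ t)) = cor S := by simp [wt, ht]
  exact fourierT_chi_eq_zero_of_corrImmune hw hwy (hwt ▸ hS)

lemma exists_isPerfectColoring_of_card_eq {Col : (Fin n → Bool) → Fin 2}
    (h : ∀ x y, Col x = Col y → ∀ j,
      #{z | hammingDist x z = 1 ∧ Col z = j} = #{z | hammingDist y z = 1 ∧ Col z = j}) :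
    ∃ A, IsPerfectColoring Col A := by
  refine ⟨fun i j => if hi : ∃ x, Col x = i
    then #{z | hammingDist hi.choose z = 1 ∧ Col z = j} else 0, fun x j => ?_⟩
  have hx : ∃ x', Col x' = Col x := ⟨x, rfl⟩
  dsimp only
  rw [dif_pos hx]
  exact h x _ hx.choose_spec.symm j

lemma exists_isPerfectColoring_chiCol {S : Finset (Fin n → Bool)}
    (h : ∀ x y, (x ∈ S ↔ y ∈ S) →
      #{z | hammingDist x z = 1 ∧ z ∈ S} = #{z | hammingDist y z = 1 ∧ z ∈ S}) :
    ∃ A, IsPerfectColoring (chiCol S) A := by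
  have hcol (z : Fin n → Bool) (j : Fin 2) : chiCol S z = j ↔ (z ∈ S ↔ j = 1) := by
    unfold chiCol; split_ifs <;> fin_cases j <;> simp_all
  have hout (x : Fin n → Bool) : #{z | hammingDist x z = 1 ∧ z ∉ S}
      = n - #{z | hammingDist x z = 1 ∧ z ∈ S} := by
    have := Finset.card_filter_add_card_filter_not (s := {z | hammingDist x z = 1}) (· ∈ S)
    simp only [Finset.filter_filter, card_hammingDist_eq_one] at this
    omega
  refine exists_isPerfectColoring_of_card_eq fun x y hxy j => ?_
  have hmem : x ∈ S ↔ y ∈ S := by simpa [hcol] using ((hcol y (chiCol S x)).mp hxy.symm).symm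
  fin_cases j <;> simp [hcol, hout, h x y hmem]

lemma sum_erase_wt_sub_mul_fourierT_chi_sq {S : Finset (Fin n → Bool)}
    (heq : nei S + 2 * ((cor S : ℚ) + 1) * (1 - rho S) = n) :
    ∑ v ∈ univ.erase (fun _ => false), (wt v - ((cor S : ℚ) + 1)) * fourierT (chi S) v ^ 2 = 0 := by
  set F := fourierT (chi S)
  set c : ℚ := cor S + 1
  set D := ∑ x ∈ S, (#{y | hammingDist x y = 1 ∧ y ∈ S} : ℚ)
  have hP : ∑ v, F v * F v = 2 ^ n * #S := by
    rw [sum_fourierT_mul_fourierT, sum_chi_mul_chi]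
  have hW : ∑ v, (n - 2 * wt v) * F v ^ 2 = 2 ^ n * D := by
    rw [sum_weight_mul_fourierT_sq, sum_nbrSum_chi_mul_chi]
  have hkey : 2 ^ n * D + 2 * c * (#S * 2 ^ n - #S ^ 2) = n * 2 ^ n * #S := by
    have hρ : rho S * 2 ^ n = #S := div_mul_cancel₀ _ (by positivity)
    linear_combination (#S * 2 ^ n) * heq - 2 ^ n * card_mul_nei S + 2 * c * #S * hρ
  have hall : ∑ v, (wt v - c) * F v ^ 2
      = (n / 2 - c) * ∑ v, F v * F v - 1 / 2 * ∑ v, (n - 2 * wt v) * F v ^ 2 := by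
    rw [Finset.mul_sum, Finset.mul_sum, ← Finset.sum_sub_distrib]
    exact Finset.sum_congr rfl fun v _ => by ring
  have hsplit := Finset.sum_erase_add univ (fun v => (wt v - c) * F v ^ 2)
    (mem_univ fun _ => false)
  simp only [wt_eq_zero_iff.mpr rfl, F, fourierT_chi_false] at hsplit
  rw [hall, hP, hW] at hsplit
  linear_combination hsplit - hkey / 2

lemma wt_eq_of_fourierT_chi_ne_zero {S : Finset (Fin n → Bool)}
    (heq : nei S + 2 * ((cor S : ℚ) + 1) * (1 - rho S) = n) {w : Fin n → Bool}
    (hw : w ≠ fun _ => false) (hF : fourierT (chi S) w ≠ 0) : wt w = cor S + 1 := by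
  have hnonneg : ∀ v ∈ univ.erase (fun _ => false),
      0 ≤ (wt v - ((cor S : ℚ) + 1)) * fourierT (chi S) v ^ 2 := by
    intro v hv
    by_cases hle : wt v ≤ cor S
    · simp [fourierT_chi_eq_zero_of_wt_le_cor (Finset.ne_of_mem_erase hv) hle]
    · have : (cor S : ℚ) + 1 ≤ wt v := by exact_mod_cast Nat.lt_of_not_le hle
      positivity
  have hterm := (Finset.sum_eq_zero_iff_of_nonneg hnonneg).mp
    (sum_erase_wt_sub_mul_fourierT_chi_sq heq) w (by simp [hw])
  have hwc : (wt w : ℚ) = cor S + 1 :=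
    sub_eq_zero.mp ((mul_eq_zero.mp hterm).resolve_right (pow_ne_zero 2 hF))
  exact_mod_cast hwc

end BoolCube

open BoolCube

theorem stmt1_general {n : ℕ} (S : Finset (Fin n → Bool))
    (heq : nei S + 2 * ((cor S : ℚ) + 1) * (1 - rho S) = (n : ℚ)) :
    ∃ A : Fin 2 → Fin 2 → ℕ, IsPerfectColoring (chiCol S) A := by
  have hnbr := nbrSum_eq_of_fourierT_ne_zero fun _ => wt_eq_of_fourierT_chi_ne_zero heq
  refine exists_isPerfectColoring_chiCol fun x y hxy => ?_
  have hchi : chi S x = chi S y := by simp [chi, hxy]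
  have := hnbr x
  rw [hchi, ← hnbr y, nbrSum_chi, nbrSum_chi] at this
  exact_mod_cast this

/-- For nonempty `S ⊆ E^n` with `ρ(S) ≤ 1/2`, if
`nei(S) + 2(cor(S)+1)(1 - ρ(S)) = n` then `χ^S` is a perfect 2-coloring. -/
theorem stmt1 {n : ℕ} (S : Finset (Fin n → Bool)) (hS : S.Nonempty) (hρ : rho S ≤ 1 / 2)
    (heq : nei S + 2 * ((cor S : ℚ) + 1) * (1 - rho S) = (n : ℚ)) :
    ∃ A : Fin 2 → Fin 2 → ℕ, IsPerfectColoring (chiCol S) A :=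
  stmt1_general S heq
end

section
/- Let a = χ^S be a perfect 2-coloring of E^n with matrix of parameters ((n−b, b),(c, n−c)), where b, c > 0. Then cor(S) = (b+c)/2 − 1. -/
open Finset

namespace BooleanCube

variable {n : ℕ}

def walsh (u x : Fin n → Bool) : ℚ := ∏ i, if u i && x i then -1 else 1

def walshCoeff (S : Finset (Fin n → Bool)) (u : Fin n → Bool) : ℚ := ∑ x ∈ S, walsh u x

@[simp] lemma walsh_bot (x : Fin n → Bool) : walsh ⊥ x = 1 := by
  simp [walsh]

lemma sum_prod_bool {R : Type*} [CommSemiring R] (g : Fin n → Bool → R) :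
    ∑ x : Fin n → Bool, ∏ i, g i (x i) = ∏ i, (g i false + g i true) := by
  rw [← Fintype.prod_sum]
  simp only [Fintype.sum_bool, add_comm]

lemma prod_ite_two_one (y : Fin n → Bool) : ∏ i, (if y i then 2 else 1 : ℚ) = 2 ^ wt y := by
  rw [← Finset.prod_filter, Finset.prod_const, wt]

lemma sum_walsh_mul_walsh (u v : Fin n → Bool) :
    ∑ x, walsh u x * walsh v x = if u = v then 2 ^ n else 0 := by
  have coord (a c : Bool) : ((if a && false then -1 else 1) * (if c && false then -1 else 1) +
      (if a && true then -1 else 1) * (if c && true then -1 else 1) : ℚ) =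
      if a = c then 2 else 0 := by
    cases a <;> cases c <;> norm_num
  simp only [walsh, ← Finset.prod_mul_distrib]
  rw [sum_prod_bool fun i b => (if u i && b then -1 else 1) * (if v i && b then -1 else 1)]
  simp only [coord, Fintype.prod_ite_zero, funext_iff, Finset.prod_const, Finset.card_univ,
    Fintype.card_fin]

lemma sum_walsh_eq_zero {v : Fin n → Bool} (hv : v ≠ ⊥) : ∑ x, walsh v x = 0 := by
  simpa [hv.symm] using sum_walsh_mul_walsh ⊥ v

lemma face_top (z : Fin n → Bool) : face ⊤ z = {z} := by
  ext x
  simp [face, funext_iff]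

lemma sum_walsh_mul_walsh_le (y x z : Fin n → Bool) :
    ∑ u with ∀ i, u i → y i, walsh u x * walsh u z =
      if x ∈ face y z then 2 ^ wt y else 0 := by
  have coord (c a d : Bool) : ((if false → c then 1 else 0) *
      ((if false && a then -1 else 1) * (if false && d then -1 else 1)) +
      (if true → c then 1 else 0) * ((if true && a then -1 else 1) * (if true && d then -1 else 1))
      : ℚ) = if c → a = d then (if c then 2 else 1) else 0 := by
    cases a <;> cases c <;> cases d <;> norm_num
  have as_prod (u : Fin n → Bool) : (if ∀ i, u i → y i then walsh u x * walsh u z else 0) =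
      ∏ i, (if u i → y i then 1 else 0) *
        ((if u i && x i then -1 else 1) * (if u i && z i then -1 else 1)) := by
    rw [Finset.prod_mul_distrib, Finset.prod_boole, walsh, walsh, ← Finset.prod_mul_distrib]
    simp
  simp only [Finset.sum_filter, as_prod]
  rw [sum_prod_bool fun i b => (if b → y i then 1 else 0) *
    ((if b && x i then -1 else 1) * (if b && z i then -1 else 1)),
    Finset.prod_congr rfl fun i _ => coord (y i) (x i) (z i), Fintype.prod_ite_zero,
    prod_ite_two_one]
  simp [face]

lemma two_pow_wt_mul_card_face_inter (S : Finset (Fin n → Bool)) (y z : Fin n → Bool) :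
    2 ^ wt y * (#(face y z ∩ S) : ℚ) =
      ∑ u with ∀ i, u i → y i, walshCoeff S u * walsh u z := by
  simp only [walshCoeff, Finset.sum_mul]
  rw [Finset.sum_comm, Finset.sum_congr rfl fun x _ => sum_walsh_mul_walsh_le y x z, Finset.sum_ite_mem,
    Finset.sum_const, nsmul_eq_mul, Finset.inter_comm, mul_comm]

lemma two_pow_wt_mul_sum_walsh_mul_card_face_inter (S : Finset (Fin n → Bool))
    {y v : Fin n → Bool} (hv : ∀ i, v i → y i) :
    2 ^ wt y * ∑ z, walsh v z * (#(face y z ∩ S) : ℚ) = 2 ^ n * walshCoeff S v := by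
  calc 2 ^ wt y * ∑ z, walsh v z * (#(face y z ∩ S) : ℚ)
      = ∑ z, walsh v z * ∑ u with ∀ i, u i → y i, walshCoeff S u * walsh u z := by
        simp only [Finset.mul_sum, ← two_pow_wt_mul_card_face_inter, mul_left_comm]
    _ = ∑ u with ∀ i, u i → y i, walshCoeff S u * ∑ z, walsh v z * walsh u z := by
        simp only [Finset.mul_sum]
        rw [Finset.sum_comm]
        simp only [mul_left_comm]
    _ = 2 ^ n * walshCoeff S v := by
        simp only [sum_walsh_mul_walsh, mul_ite, mul_zero]
        rw [Finset.sum_ite_eq, if_pos (by simpa using hv), mul_comm]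

@[simp] lemma walshCoeff_bot (S : Finset (Fin n → Bool)) : walshCoeff S ⊥ = #S := by
  simp [walshCoeff]

lemma wt_pos_iff {v : Fin n → Bool} : 0 < wt v ↔ v ≠ ⊥ := by
  simp [wt, Finset.card_pos, Finset.filter_nonempty_iff, Function.ne_iff]

lemma wt_le_wt {u y : Fin n → Bool} (h : ∀ i, u i → y i) : wt u ≤ wt y :=
  Finset.card_le_card (Finset.monotone_filter_right _ fun i _ => h i)

lemma exists_wt_eq_of_wt_le {v : Fin n → Bool} {m : ℕ} (hvm : wt v ≤ m) (hmn : m ≤ n) :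
    ∃ y : Fin n → Bool, (∀ i, v i → y i) ∧ wt y = m := by
  obtain ⟨t, hvt, rfl⟩ := Finset.exists_superset_card_eq hvm (by simpa using hmn)
  refine ⟨fun i => decide (i ∈ t), fun i hi => ?_, by simp [wt]⟩
  simpa using hvt (by simpa using hi)

lemma two_pow_wt_mul_card_face_inter_eq_card {S : Finset (Fin n → Bool)} {y : Fin n → Bool}
    (h : ∀ v, 0 < wt v → wt v ≤ wt y → walshCoeff S v = 0) (z : Fin n → Bool) :
    2 ^ wt y * (#(face y z ∩ S) : ℚ) = #S := by
  rw [two_pow_wt_mul_card_face_inter, Finset.sum_eq_single_of_mem ⊥ (by simp)]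
  · simp
  · intro v hv hv_ne
    rw [h v (wt_pos_iff.2 hv_ne) (wt_le_wt (Finset.mem_filter.1 hv).2), zero_mul]

theorem corrImmune_iff_walshCoeff_eq_zero {S : Finset (Fin n → Bool)} {m : ℕ} (hmn : m ≤ n) :
    CorrImmune S m ↔ ∀ v, 0 < wt v → wt v ≤ m → walshCoeff S v = 0 := by
  constructor
  · intro hS v hv_pos hvm
    obtain ⟨y, hvy, rfl⟩ := exists_wt_eq_of_wt_le hvm hmn
    have hconst (z : Fin n → Bool) : #(face y z ∩ S) = #(face y ⊥ ∩ S) := hS y z y ⊥ rfl rfl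
    have := two_pow_wt_mul_sum_walsh_mul_card_face_inter S hvy
    simp only [hconst, ← Finset.sum_mul, sum_walsh_eq_zero (wt_pos_iff.1 hv_pos), zero_mul,
      mul_zero] at this
    simpa using this.symm
  · intro h y₁ z₁ y₂ z₂ h₁ h₂
    subst h₁
    have e₁ := two_pow_wt_mul_card_face_inter_eq_card h z₁
    have e₂ := two_pow_wt_mul_card_face_inter_eq_card (y := y₂) (h₂ ▸ h) z₂
    rw [h₂] at e₂
    exact_mod_cast mul_left_cancel₀ (by positivity) (e₁.trans e₂.symm)

lemma hammingDist_eq_one_iff {w x : Fin n → Bool} :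
    hammingDist w x = 1 ↔ ∃ i, x = Function.update w i (!w i) := by
  simp only [hammingDist, Finset.card_eq_one, Finset.ext_iff, Finset.mem_filter,
    Finset.mem_univ, true_and, Finset.mem_singleton, funext_iff, Function.update_apply]
  refine exists_congr fun i => forall_congr' fun j => ?_
  by_cases h : j = i
  · subst h
    cases w j <;> cases x j <;> simp
  · cases w j <;> cases x j <;> simp [h]

lemma injective_update_not (w : Fin n → Bool) :
    Function.Injective fun i => Function.update w i (!w i) := by
  intro i j h
  by_contra hij
  simpa [Function.update_apply, hij] using congrFun h i

lemma walsh_update_not (v w : Fin n → Bool) (i : Fin n) :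
    walsh v (Function.update w i (!w i)) = (if v i then -1 else 1) * walsh v w := by
  rw [walsh, walsh, Fintype.prod_eq_mul_prod_compl i, Fintype.prod_eq_mul_prod_compl i,
    Function.update_self, ← mul_assoc]
  congr 1
  · cases v i <;> cases w i <;> norm_num
  · refine Finset.prod_congr rfl fun j hj => ?_
    rw [Function.update_of_ne (by simpa using hj)]

lemma sum_ite_neg_one_one (v : Fin n → Bool) :
    ∑ i, (if v i then -1 else 1 : ℚ) = n - 2 * wt v := by
  have h (b : Bool) : (if b then -1 else 1 : ℚ) = 1 - 2 * if b then 1 else 0 := by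
    cases b <;> norm_num
  simp only [h, Finset.sum_sub_distrib, ← Finset.mul_sum, Finset.sum_boole, wt]
  simp

lemma sum_walsh_hammingDist_eq_one (v w : Fin n → Bool) :
    ∑ x with hammingDist w x = 1, walsh v x = (n - 2 * wt v) * walsh v w := by
  have hnbhd : (Finset.univ.filter fun x => hammingDist w x = 1) =
       Finset.univ.image fun i => Function.update w i (!w i) := by
    ext x
    simp only [Finset.mem_filter, Finset.mem_univ, true_and, Finset.mem_image,
      hammingDist_eq_one_iff]
    exact exists_congr fun i => eq_comm
  rw [hnbhd, Finset.sum_image fun i _ j _ h => injective_update_not w h]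
  simp only [walsh_update_not, ← Finset.sum_mul, sum_ite_neg_one_one]

lemma sum_card_neighbors_mul_walsh (S : Finset (Fin n → Bool)) (v : Fin n → Bool) :
    ∑ x, (#{y | hammingDist x y = 1 ∧ y ∈ S} : ℚ) * walsh v x =
      (n - 2 * wt v) * walshCoeff S v := by
  have hcard (x : Fin n → Bool) : (#{y | hammingDist x y = 1 ∧ y ∈ S} : ℚ) =
      ∑ y ∈ S, if hammingDist y x = 1 then 1 else 0 := by
    rw [Finset.sum_boole]
    congr 2
    ext y
    simp [hammingDist_comm, and_comm]
  simp only [hcard, Finset.sum_mul, ite_mul, one_mul, zero_mul]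
  rw [Finset.sum_comm]
  simp only [← Finset.sum_filter, sum_walsh_hammingDist_eq_one, walshCoeff, Finset.mul_sum]

lemma wt_le (v : Fin n → Bool) : wt v ≤ n :=
  (Finset.card_filter_le _ _).trans_eq (by simp)

lemma cor_eq_of_walshCoeff_ne_zero {S : Finset (Fin n → Bool)} {v₀ : Fin n → Bool}
    (hv₀ : v₀ ≠ ⊥) (hW₀ : walshCoeff S v₀ ≠ 0)
    (hmin : ∀ v, 0 < wt v → wt v < wt v₀ → walshCoeff S v = 0) :
    cor S = wt v₀ - 1 := by
  have hpos := wt_pos_iff.2 hv₀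
  refine IsGreatest.csSup_eq ⟨⟨(Nat.sub_le _ _).trans (wt_le v₀), ?_⟩, ?_⟩
  · exact (corrImmune_iff_walshCoeff_eq_zero ((Nat.sub_le _ _).trans (wt_le v₀))).2
      fun v hv hvm => hmin v hv (by omega)
  · rintro m ⟨hmn, hS⟩
    by_contra hm
    exact hW₀ ((corrImmune_iff_walshCoeff_eq_zero hmn).1 hS v₀ hpos (by omega))

section PerfectColoring

variable {S : Finset (Fin n → Bool)} {A : Fin 2 → Fin 2 → ℕ} {b c : ℕ}

lemma card_neighbors_of_isPerfectColoring (hA : IsPerfectColoring (chiCol S) A)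
    (h01 : A 0 1 = b) (h11 : A 1 1 + c = n) (x : Fin n → Bool) :
    (#{y | hammingDist x y = 1 ∧ y ∈ S} : ℚ) = b + (n - b - c) * chi S x := by
  have hcol : (Finset.univ.filter fun y => hammingDist x y = 1 ∧ y ∈ S) =
      Finset.univ.filter fun y => hammingDist x y = 1 ∧ chiCol S y = 1 := by
    simp [chiCol]
  have h11' : (A 1 1 : ℚ) + c = n := by exact_mod_cast h11
  rw [hcol, hA x 1]
  by_cases hxS : x ∈ S
  · simp [chiCol, chi, hxS]
    linarith
  · simp [chiCol, chi, hxS, h01]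

lemma walshCoeff_eq_zero_of_isPerfectColoring (hA : IsPerfectColoring (chiCol S) A)
    (h01 : A 0 1 = b) (h11 : A 1 1 + c = n) {v : Fin n → Bool} (hv : v ≠ ⊥)
    (hvbc : 2 * wt v ≠ b + c) : walshCoeff S v = 0 := by
  have hsum := sum_card_neighbors_mul_walsh S v
  simp only [card_neighbors_of_isPerfectColoring hA h01 h11, add_mul, Finset.sum_add_distrib,
    ← Finset.mul_sum, sum_walsh_eq_zero hv, mul_assoc] at hsum
  have hchi : ∑ x, chi S x * walsh v x = walshCoeff S v := by
    simp [chi, walshCoeff, ite_mul, Finset.sum_ite_mem]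
  rw [hchi] at hsum
  have hvbc' : (2 * wt v : ℚ) ≠ b + c := by exact_mod_cast hvbc
  have : (2 * wt v - b - c : ℚ) * walshCoeff S v = 0 := by linear_combination hsum
  refine (mul_eq_zero.1 this).resolve_left fun h => hvbc' ?_
  linarith

lemma exists_walshCoeff_ne_zero_of_isPerfectColoring (hA : IsPerfectColoring (chiCol S) A)
    (h01 : A 0 1 = b) (h10 : A 1 0 = c) (hb : 0 < b) (hc : 0 < c) :
    ∃ v ≠ ⊥, walshCoeff S v ≠ 0 := by
  by_contra! h
  have hmem (z : Fin n → Bool) : z ∈ S ↔ ⊥ ∈ S := by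
    have hz := two_pow_wt_mul_card_face_inter_eq_card (y := ⊤)
      (fun v hv _ => h v (wt_pos_iff.1 hv))
    have := mul_left_cancel₀ (by positivity) ((hz z).trans (hz ⊥).symm)
    simp only [face_top, Nat.cast_inj, Finset.singleton_inter, apply_ite Finset.card,
      Finset.card_singleton, Finset.card_empty] at this
    split_ifs at this <;> simp_all
  by_cases h0 : ⊥ ∈ S
  · have := hA ⊥ 0
    simp [chiCol, hmem, h0, h10] at this
    omega
  · have := hA ⊥ 1
    simp [chiCol, hmem, h0, h01] at this
    omega

end PerfectColoring

end BooleanCube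

open BooleanCube in
theorem stmt6_general {n : ℕ} (S : Finset (Fin n → Bool)) (b c : ℕ) (A : Fin 2 → Fin 2 → ℕ)
    (hA : IsPerfectColoring (chiCol S) A)
    (h01 : A 0 1 = b) (h10 : A 1 0 = c) (h11 : A 1 1 + c = n)
    (hb : 0 < b) (hc : 0 < c) :
    2 * (cor S + 1) = b + c := by
  obtain ⟨v₀, hv₀, hW₀⟩ := exists_walshCoeff_ne_zero_of_isPerfectColoring hA h01 h10 hb hc
  have hwt : 2 * wt v₀ = b + c := by
    by_contra hne
    exact hW₀ (walshCoeff_eq_zero_of_isPerfectColoring hA h01 h11 hv₀ hne)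
  have hcor : cor S = wt v₀ - 1 := cor_eq_of_walshCoeff_ne_zero hv₀ hW₀ fun v hv hlt =>
    walshCoeff_eq_zero_of_isPerfectColoring hA h01 h11 (wt_pos_iff.1 hv) (by omega)
  have := wt_pos_iff.2 hv₀
  omega

/-- If `χ^S` is a perfect coloring with matrix `((n-b, b), (c, n-c))`,
`b, c > 0`, then `cor S = (b+c)/2 - 1`, i.e. `2(cor S + 1) = b + c`. -/
theorem stmt6 {n : ℕ} (S : Finset (Fin n → Bool)) (b c : ℕ) (A : Fin 2 → Fin 2 → ℕ)
    (hA : IsPerfectColoring (chiCol S) A)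
    (h00 : A 0 0 + b = n) (h01 : A 0 1 = b) (h10 : A 1 0 = c) (h11 : A 1 1 + c = n)
    (hb : 0 < b) (hc : 0 < c) :
    2 * (cor S + 1) = b + c :=
  stmt6_general S b c A hA h01 h10 h11 hb hc
end
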